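/- arXiv:2506.03802 — 2 statements merged into one kernel-verified Lean document; each statement's English description precedes it below -/
import Mathlib

section
/- MI(m, X) = 0 if and only if (A) every agent a receives the Nash value of their game, U_{a,m(a)}(x_a, x_{m(a)}) = V*_{a,m(a)}, and (B) the matching m is individually rational and has no blocking pairs under the utilities induced by X (i.e., (m, X) is a matching equilibrium with these value conditions). -/
noncomputable section

variable {P A : Type*} [Fintype P] [Fintype A]

/-- Feasibility of a subsidy vector `s` for the matching-instability linear program.
Here `u a` is the current expected utility `U_{a,m(a)}(x_a, x_{m(a)})` of agent `a`,
`u0 a` is the utility `U_{a,⊥}` of being unmatched, `Vm a` is the Nash value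
`V*_{a,m(a)}` of the game agent `a` plays with their current match, and
`V p q`, `V' q p` are the Nash values `V*_{p,q}`, `V*_{q,p}` of the game between a
left agent `p` and a right agent `q`. -/
def Feasible (u u0 Vm : P ⊕ A → ℝ) (V : P → A → ℝ) (V' : A → P → ℝ)
    (s : P ⊕ A → ℝ) : Prop :=
  (∀ (p : P) (q : A),
      min (V p q - u (.inl p) - s (.inl p)) (V' q p - u (.inr q) - s (.inr q)) ≤ 0) ∧
  (∀ a : P ⊕ A, 0 ≤ u a - u0 a + s a) ∧
  (∀ a : P ⊕ A, Vm a - u a - s a ≤ 0) ∧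
  (∀ a : P ⊕ A, 0 ≤ s a)

/-- The matching instability `MI(m, X)`: the minimum total subsidy over all feasible
subsidy vectors. -/
def MI (u u0 Vm : P ⊕ A → ℝ) (V : P → A → ℝ) (V' : A → P → ℝ) : ℝ :=
  sInf {t : ℝ | ∃ s : P ⊕ A → ℝ, Feasible u u0 Vm V V' s ∧ t = ∑ a, s a}

section Feasibility

variable {L R : Type*} (u u0 Vm : L ⊕ R → ℝ) (V : L → R → ℝ) (V' : R → L → ℝ)

theorem Feasible.sum_nonneg [Fintype L] [Fintype R] {s : L ⊕ R → ℝ}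
    (hs : Feasible u u0 Vm V V' s) : 0 ≤ ∑ a, s a :=
  Finset.sum_nonneg fun a _ => hs.2.2.2 a

theorem feasible_const_of_le {c : ℝ} (hc : 0 ≤ c) (hpair : ∀ p q, V p q - u (.inl p) ≤ c)
    (hagent : ∀ a, max (u0 a - u a) (Vm a - u a) ≤ c) :
    Feasible u u0 Vm V V' fun _ => c :=
  ⟨fun p q => min_le_of_left_le (by linarith [hpair p q]),
    fun a => by linarith [le_max_left (u0 a - u a) (Vm a - u a), hagent a],
    fun a => by linarith [le_max_right (u0 a - u a) (Vm a - u a), hagent a],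
    fun _ => hc⟩

theorem exists_feasible [Finite L] [Finite R] : ∃ s, Feasible u u0 Vm V V' s := by
  obtain ⟨c₁, hc₁⟩ := Finite.exists_le fun pq : L × R => V pq.1 pq.2 - u (.inl pq.1)
  obtain ⟨c₂, hc₂⟩ := Finite.exists_le fun a => max (u0 a - u a) (Vm a - u a)
  exact ⟨_, feasible_const_of_le u u0 Vm V V' (le_max_left 0 (max c₁ c₂))
    (fun p q => (hc₁ (p, q)).trans ((le_max_left _ _).trans (le_max_right _ _)))
    (fun a => (hc₂ a).trans ((le_max_right _ _).trans (le_max_right _ _)))⟩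

theorem isClosed_setOf_feasible : IsClosed {s | Feasible u u0 Vm V V' s} := by
  simp only [Feasible, Set.ofPred_and, Set.ofPred_forall]
  refine .inter (isClosed_iInter fun p => isClosed_iInter fun q => isClosed_le ?_ ?_) <|
    .inter (isClosed_iInter fun a => isClosed_le ?_ ?_) <| .inter
    (isClosed_iInter fun a => isClosed_le ?_ ?_) (isClosed_iInter fun a => isClosed_le ?_ ?_)
  all_goals fun_prop

theorem feasible_zero_iff :
    Feasible u u0 Vm V V' 0 ↔
      (∀ a, Vm a ≤ u a) ∧ (∀ a, u0 a ≤ u a) ∧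
        ∀ p q, ¬(u (.inl p) < V p q ∧ u (.inr q) < V' q p) := by
  simp only [Feasible, Pi.zero_apply, sub_zero, add_zero, le_refl, implies_true, and_true,
    min_le_iff, sub_nonpos, sub_nonneg, not_and_or, not_lt]
  tauto

/-- The infimum is attained at `0` because the feasible set is closed and, for nonnegative `s`,
`‖s‖ ≤ ∑ a, s a`. -/
theorem MI_eq_zero_iff [Fintype L] [Fintype R] :
    MI u u0 Vm V V' = 0 ↔ Feasible u u0 Vm V V' 0 := by
  set S := {t : ℝ | ∃ s, Feasible u u0 Vm V V' s ∧ t = ∑ a, s a}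
  have hS : S.Nonempty :=
    let ⟨s, hs⟩ := exists_feasible u u0 Vm V V'
    ⟨_, s, hs, rfl⟩
  have hS_nonneg : ∀ t ∈ S, 0 ≤ t := by
    rintro _ ⟨s, hs, rfl⟩
    exact hs.sum_nonneg
  constructor
  · intro hMI
    refine (isClosed_setOf_feasible u u0 Vm V V').closure_subset
      (Metric.mem_closure_iff.2 fun ε hε => ?_)
    obtain ⟨_, ⟨s, hs, rfl⟩, hlt⟩ := exists_lt_of_csInf_lt hS (hMI.trans_lt hε)
    refine ⟨s, hs, ?_⟩
    rw [dist_zero_left, pi_norm_lt_iff hε]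
    intro a
    rw [Real.norm_of_nonneg (hs.2.2.2 a)]
    exact (Finset.single_le_sum (fun b _ => hs.2.2.2 b) (Finset.mem_univ a)).trans_lt hlt
  · intro h0
    exact le_antisymm (csInf_le ⟨0, hS_nonneg⟩ ⟨0, h0, by simp⟩) (le_csInf hS hS_nonneg)

end Feasibility

/-- In a zero-sum matching, an agent's shortfall from its value is its partner's surplus. -/
theorem eq_of_forall_le_of_zeroSum {α : Type*} {u u0 Vm : α → ℝ} (μ : α → Option α)
    (hzs : ∀ a b, μ a = some b → u b = -u a ∧ Vm b = -Vm a)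
    (hunm : ∀ a, μ a = none → u a = u0 a ∧ Vm a = u0 a)
    (hle : ∀ a, Vm a ≤ u a) (a : α) : u a = Vm a := by
  refine le_antisymm ?_ (hle a)
  cases hμ : μ a with
  | none => exact ((hunm a hμ).1.trans (hunm a hμ).2.symm).le
  | some b =>
    obtain ⟨hub, hVb⟩ := hzs a b hμ
    linarith [hle b]

/-- `μ` is the matching, `μ a = none` meaning that `a` is unmatched. -/
theorem stmt7_general (u u0 Vm : P ⊕ A → ℝ) (V : P → A → ℝ) (V' : A → P → ℝ)
    (μ : P ⊕ A → Option (P ⊕ A))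
    (hzs : ∀ a b : P ⊕ A, μ a = some b → u b = -u a ∧ Vm b = -Vm a)
    (hunm : ∀ a : P ⊕ A, μ a = none → u a = u0 a ∧ Vm a = u0 a) :
    MI u u0 Vm V V' = 0 ↔
      ((∀ a : P ⊕ A, u a = Vm a) ∧
        (∀ a : P ⊕ A, u0 a ≤ u a) ∧
        (∀ (p : P) (q : A), ¬(u (.inl p) < V p q ∧ u (.inr q) < V' q p))) := by
  rw [MI_eq_zero_iff, feasible_zero_iff]
  exact and_congr_left' ⟨eq_of_forall_le_of_zeroSum μ hzs hunm, fun h a => (h a).ge⟩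

/-- `MI(m, X) = 0` iff (A) every agent receives the Nash value of
their game, and (B) the matching is individually rational and has no blocking
pairs under the utilities induced by the strategies.

Here `μ` is the matching (with `μ a = none` meaning `a` is unmatched), matched
pairs play zero-sum games (so their utilities and values are opposite), and an
unmatched agent gets their outside utility. -/
theorem stmt7 (u u0 Vm : P ⊕ A → ℝ) (V : P → A → ℝ) (V' : A → P → ℝ)
    (μ : P ⊕ A → Option (P ⊕ A))
    (hsym : ∀ a b : P ⊕ A, μ a = some b → μ b = some a)
    (hside : ∀ (p : P) (b : P ⊕ A), μ (.inl p) = some b → ∃ q : A, b = .inr q)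
    (hside' : ∀ (q : A) (b : P ⊕ A), μ (.inr q) = some b → ∃ p : P, b = .inl p)
    (hzs : ∀ a b : P ⊕ A, μ a = some b → u b = -u a ∧ Vm b = -Vm a)
    (hVm : ∀ (p : P) (q : A), μ (.inl p) = some (.inr q) →
      Vm (.inl p) = V p q ∧ Vm (.inr q) = V' q p)
    (hunm : ∀ a : P ⊕ A, μ a = none → u a = u0 a ∧ Vm a = u0 a) :
    MI u u0 Vm V V' = 0 ↔
      ((∀ a : P ⊕ A, u a = Vm a) ∧
        (∀ a : P ⊕ A, u0 a ≤ u a) ∧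
        (∀ (p : P) (q : A), ¬(u (.inl p) < V p q ∧ u (.inr q) < V' q p))) :=
  stmt7_general u u0 Vm V V' μ hzs hunm
end
end

section
/- Let m be a matching with strategies X, and suppose there exist estimated utilities Ū and estimated values V̄* such that: (i) V̄*_{a,m(a)} ≤ Ū_{a,m(a)}(x_a, x_{m(a)}) for all a; (ii) m is stable with respect to V̄* (no pair (p,q) with V̄*_{p,q} > V̄*_{p,m(p)} and V̄*_{q,p} > V̄*_{q,m(q)}, and V̄*_{a,m(a)} ≥ U_{a,⊥} for all a); (iii) optimism holds: V*_{a,a'} ≤ V̄*_{a,a'} and U_{a,m(a)}(x_a, x_{m(a)}) ≤ Ū_{a,m(a)}(x_a, x_{m(a)}) for all a, a'. Then the subsidies s_a := Ū_{a,m(a)}(x_a, x_{m(a)}) − U_{a,m(a)}(x_a, x_{m(a)}) form a feasible solution to the matching instability program, and hence MI(m, X) ≤ Σ_{a} [Ū_{a,m(a)}(x_a, x_{m(a)}) − U_{a,m(a)}(x_a, x_{m(a)})]. -/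
noncomputable section

variable {P A : Type*} [Fintype P] [Fintype A]

-- Subsidies are nonnegative, so the set of feasible totals is bounded below by `0` and its
-- infimum is a genuine lower bound (not the junk value of an unbounded `sInf`).
theorem MI_le_sum_of_feasible {u u0 Vm : P ⊕ A → ℝ} {V : P → A → ℝ} {V' : A → P → ℝ}
    {s : P ⊕ A → ℝ} (hs : Feasible u u0 Vm V V' s) : MI u u0 Vm V V' ≤ ∑ a, s a :=
  csInf_le ⟨0, by rintro t ⟨s', hs', rfl⟩; exact Finset.sum_nonneg fun a _ => hs'.2.2.2 a⟩
    ⟨s, hs, rfl⟩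

/-- if the estimated quantities are optimistic, each agent's
estimated utility is at least the estimated value of their matched game, and the
matching is stable with respect to the estimated values, then the subsidies
`s_a = Ū_a − U_a` are feasible for the matching-instability program, and hence
`MI(m, X) ≤ Σ_a (Ū_a − U_a)`.

Here `ubar a` is the estimated utility `Ū_{a,m(a)}(x_a, x_{m(a)})`, `Vbm a` the
estimated value `V̄*_{a,m(a)}` of `a`'s matched game, and `Vb p q`, `Vb' q p` the
estimated values `V̄*_{p,q}`, `V̄*_{q,p}` of cross-side games. -/
theorem stmt12 (u u0 Vm : P ⊕ A → ℝ) (V : P → A → ℝ) (V' : A → P → ℝ)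
    (ubar Vbm : P ⊕ A → ℝ) (Vb : P → A → ℝ) (Vb' : A → P → ℝ)
    -- (i) estimated value is at most estimated utility for every agent
    (hi : ∀ a : P ⊕ A, Vbm a ≤ ubar a)
    -- (ii) stability w.r.t. the estimated values
    (hii_blocking : ∀ (p : P) (q : A),
      ¬(Vbm (.inl p) < Vb p q ∧ Vbm (.inr q) < Vb' q p))
    (hii_IR : ∀ a : P ⊕ A, u0 a ≤ Vbm a)
    -- (iii) optimism
    (hiii_V : ∀ (p : P) (q : A), V p q ≤ Vb p q)
    (hiii_V' : ∀ (q : A) (p : P), V' q p ≤ Vb' q p)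
    (hiii_Vm : ∀ a : P ⊕ A, Vm a ≤ Vbm a)
    (hiii_u : ∀ a : P ⊕ A, u a ≤ ubar a) :
    Feasible u u0 Vm V V' (fun a => ubar a - u a) ∧
      MI u u0 Vm V V' ≤ ∑ a, (ubar a - u a) := by
  -- With `s = Ū - U` every constraint compares a true value with `Ū`; optimism and (i) replace
  -- both sides by estimated quantities, where stability and individual rationality apply.
  have hfeas : Feasible u u0 Vm V V' (fun a => ubar a - u a) := by
    refine ⟨fun p q => ?_, fun a => ?_, fun a => ?_, fun a => ?_⟩ <;> dsimp only
    · have hstable : min (Vb p q - Vbm (.inl p)) (Vb' q p - Vbm (.inr q)) ≤ 0 := by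
        simpa only [min_le_iff, sub_nonpos, not_and_or, not_lt] using hii_blocking p q
      calc min (V p q - u (.inl p) - (ubar (.inl p) - u (.inl p)))
              (V' q p - u (.inr q) - (ubar (.inr q) - u (.inr q)))
          ≤ min (Vb p q - Vbm (.inl p)) (Vb' q p - Vbm (.inr q)) :=
            min_le_min (by linarith [hiii_V p q, hi (.inl p)]) (by linarith [hiii_V' q p, hi (.inr q)])
        _ ≤ 0 := hstable
    · linarith [hii_IR a, hi a]
    · linarith [hiii_Vm a, hi a]
    · linarith [hiii_u a]
  exact ⟨hfeas, MI_le_sum_of_feasible hfeas⟩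
end
end
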